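/- A bounded operator A on a complex Hilbert space H is quasinormal if and only if A^{*k} A^k = (A*A)^k for all nonnegative integers k. -/

import Mathlib

/-!
Write `T = A*A`. If `A` commutes with `T`, then `A*ᵏ⁺¹Aᵏ⁺¹ = A* (A*ᵏAᵏ) A = A* Tᵏ A = Tᵏ⁺¹`
by induction. Conversely, the cases `k = 2, 3` give `A* T A = T²` and `A* T² A = T³`, and
expanding `D*D` for `D = TA - AT` with these two identities yields `T³ - T³ - T³ + T³ = 0`;
the C*-identity `‖D*D‖ = ‖D‖²` then forces `D = 0`.
-/

open ContinuousLinearMap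

/-- A bounded operator is quasinormal if it commutes with `A*A`. -/
def Quasinormal {H : Type*} [NormedAddCommGroup H] [InnerProductSpace ℂ H] [CompleteSpace H]
    (A : H →L[ℂ] H) : Prop :=
  A * (adjoint A * A) = (adjoint A * A) * A

theorem pow_succ_mul_pow_succ {M : Type*} [Monoid M] (a b : M) (k : ℕ) :
    b ^ (k + 1) * a ^ (k + 1) = b * (b ^ k * a ^ k) * a := by
  rw [pow_succ', pow_succ, mul_assoc, mul_assoc, mul_assoc]

theorem pow_mul_pow_eq_mul_pow_of_commute {M : Type*} [Monoid M] {a b : M}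
    (h : Commute a (b * a)) (k : ℕ) : b ^ k * a ^ k = (b * a) ^ k := by
  induction k with
  | zero => simp
  | succ k ih =>
    rw [pow_succ_mul_pow_succ, ih, mul_assoc, ((h.pow_right k).eq).symm, ← mul_assoc, ← pow_succ']

theorem star_commutator_mul_commutator {R : Type*} [Ring R] [StarRing R] {t : R}
    (ht : IsSelfAdjoint t) (a : R) :
    star (t * a - a * t) * (t * a - a * t) =
      star a * t ^ 2 * a - (star a * t * a) * t - t * (star a * t * a) + t * (star a * a) * t := by
  simp only [star_sub, star_mul, ht.star_eq]
  noncomm_ring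

theorem commute_star_mul_self_of_pow {E : Type*} [NormedRing E] [StarRing E] [CStarRing E] (a : E)
    (h₂ : star a ^ 2 * a ^ 2 = (star a * a) ^ 2) (h₃ : star a ^ 3 * a ^ 3 = (star a * a) ^ 3) :
    Commute a (star a * a) := by
  have hD := star_commutator_mul_commutator (IsSelfAdjoint.star_mul_self a) a
  set t := star a * a
  have ht₂ : star a * t * a = t ^ 2 := by
    rw [← h₂, pow_succ_mul_pow_succ, pow_one, pow_one]
  have ht₃ : star a * t ^ 2 * a = t ^ 3 := by
    rw [← h₃, pow_succ_mul_pow_succ, h₂]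
  rw [ht₂, ht₃] at hD
  clear_value t
  rw [show t ^ 3 - t ^ 2 * t - t * t ^ 2 + t * t * t = 0 by noncomm_ring,
    CStarRing.star_mul_self_eq_zero_iff, sub_eq_zero] at hD
  exact hD.symm

theorem commute_star_mul_self_iff {E : Type*} [NormedRing E] [StarRing E] [CStarRing E] (a : E) :
    Commute a (star a * a) ↔ ∀ k : ℕ, star a ^ k * a ^ k = (star a * a) ^ k :=
  ⟨pow_mul_pow_eq_mul_pow_of_commute, fun h => commute_star_mul_self_of_pow a (h 2) (h 3)⟩

/-- Embry's characterization: `A` is quasinormal iff `A^{*k} A^k = (A*A)^k` for all `k`. -/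
theorem quasinormal_iff_embry
    {H : Type*} [NormedAddCommGroup H] [InnerProductSpace ℂ H] [CompleteSpace H]
    (A : H →L[ℂ] H) :
    Quasinormal A ↔ ∀ k : ℕ, (adjoint A) ^ k * A ^ k = (adjoint A * A) ^ k := by
  rw [← star_eq_adjoint]
  exact commute_star_mul_self_iff A
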